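/- Two Lie structures c₁ = c_{dF+α} and c₂ = c_{dG+β} on a 3-dimensional vector space (with unimodular parts dF, dG and purely non-unimodular parts α, β) are compatible (i.e., c₁ + c₂ is a Lie structure) if and only if dF ∧ β + dG ∧ α = 0. -/
import Mathlib


open MvPolynomial

noncomputable section

variable {F : Type*} [Field F]

/-- Levi-Civita symbol on Fin 3 with values in F. -/
def eps (h i j : Fin 3) : F :=
  if (i, j) = (h + 1, h + 2) then 1 else if (i, j) = (h + 2, h + 1) then -1 else 0

/-- Matrix of the purely non-unimodular 1-form a α₁ + b α₂ + c α₃. -/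
def skewMat (a : Fin 3 → F) : Matrix (Fin 3) (Fin 3) F :=
  Matrix.of fun h k => ∑ j, a j * eps j k h

/-- The linear 1-form with coefficient matrix m: its dx_h component. -/
def formOf (m : Matrix (Fin 3) (Fin 3) F) : Fin 3 → MvPolynomial (Fin 3) F :=
  fun h => ∑ k, C (m h k) * X k

/-- Coefficient of the volume form in ω ∧ dη. -/
def wedgeD (ω η : Fin 3 → MvPolynomial (Fin 3) F) : MvPolynomial (Fin 3) F :=
  ω 0 * (pderiv 1 (η 2) - pderiv 2 (η 1))
    + ω 1 * (pderiv 2 (η 0) - pderiv 0 (η 2))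
    + ω 2 * (pderiv 0 (η 1) - pderiv 1 (η 0))

lemma formOf_add (m n : Matrix (Fin 3) (Fin 3) F) :
    formOf (m + n) = formOf m + formOf n := by
  funext h
  simp [formOf, Matrix.add_apply, map_add, add_mul, Finset.sum_add_distrib]

lemma wedge_formOf (m n : Matrix (Fin 3) (Fin 3) F) :
    wedgeD (formOf m) (formOf n) =
      C (m 0 0 * (n 2 1 - n 1 2) + m 1 0 * (n 0 2 - n 2 0) + m 2 0 * (n 1 0 - n 0 1)) * X 0
      + C (m 0 1 * (n 2 1 - n 1 2) + m 1 1 * (n 0 2 - n 2 0) + m 2 1 * (n 1 0 - n 0 1)) * X 1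
      + C (m 0 2 * (n 2 1 - n 1 2) + m 1 2 * (n 0 2 - n 2 0) + m 2 2 * (n 1 0 - n 0 1)) * X 2 := by
  simp [wedgeD, formOf, Fin.sum_univ_three, pderiv_X, Pi.single_apply]
  ring

lemma lin_eq_zero (r0 r1 r2 : F) :
    ((C r0 * X 0 + C r1 * X 1 + C r2 * X 2 : MvPolynomial (Fin 3) F) = 0)
      ↔ r0 = 0 ∧ r1 = 0 ∧ r2 = 0 := by
  constructor
  · intro h
    refine ⟨?_, ?_, ?_⟩
    · have := congrArg (eval (Pi.single (0 : Fin 3) (1 : F))) h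
      simpa [Pi.single_apply] using this
    · have := congrArg (eval (Pi.single (1 : Fin 3) (1 : F))) h
      simpa [Pi.single_apply] using this
    · have := congrArg (eval (Pi.single (2 : Fin 3) (1 : F))) h
      simpa [Pi.single_apply] using this
  · rintro ⟨h0, h1, h2⟩
    simp [h0, h1, h2]

lemma skewMat_apply (a : Fin 3 → F) :
    skewMat a 0 0 = 0 ∧ skewMat a 0 1 = -a 2 ∧ skewMat a 0 2 = a 1 ∧
    skewMat a 1 0 = a 2 ∧ skewMat a 1 1 = 0 ∧ skewMat a 1 2 = -a 0 ∧
    skewMat a 2 0 = -a 1 ∧ skewMat a 2 1 = a 0 ∧ skewMat a 2 2 = 0 := by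
  refine ⟨?_, ?_, ?_, ?_, ?_, ?_, ?_, ?_, ?_⟩ <;>
    simp [skewMat, eps, Fin.sum_univ_three]

/-- two Lie structures c₁ = c_{dF+α} and c₂ = c_{dG+β} on a
3-dimensional space (F,G symmetric matrices; α, β skew, with vectors a, b) are
compatible, i.e. the sum of the corresponding 1-forms again satisfies the
integrability condition, iff the cross term [c_F, c_β] + [c_G, c_α] vanishes,
i.e. dF ∧ dβ + dG ∧ dα = 0 (the condition written dF∧β + dG∧α = 0 in the paper). -/
theorem stmt13 (hchar : (2 : F) ≠ 0)
    (Fm Gm : Matrix (Fin 3) (Fin 3) F) (hF : Fm.IsSymm) (hG : Gm.IsSymm)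
    (a b : Fin 3 → F)
    (h1 : wedgeD (formOf (Fm + skewMat a)) (formOf (Fm + skewMat a)) = 0)
    (h2 : wedgeD (formOf (Gm + skewMat b)) (formOf (Gm + skewMat b)) = 0) :
    wedgeD (formOf (Fm + skewMat a) + formOf (Gm + skewMat b))
        (formOf (Fm + skewMat a) + formOf (Gm + skewMat b)) = 0
      ↔ wedgeD (formOf Fm) (formOf (skewMat b))
          + wedgeD (formOf Gm) (formOf (skewMat a)) = 0 := by
  obtain ⟨s00, s01, s02, s10, s11, s12, s20, s21, s22⟩ := skewMat_apply a
  obtain ⟨t00, t01, t02, t10, t11, t12, t20, t21, t22⟩ := skewMat_apply b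
  have hF01 : Fm 1 0 = Fm 0 1 := by rw [← hF.apply 1 0]
  have hF02 : Fm 2 0 = Fm 0 2 := by rw [← hF.apply 2 0]
  have hF12 : Fm 2 1 = Fm 1 2 := by rw [← hF.apply 2 1]
  have hG01 : Gm 1 0 = Gm 0 1 := by rw [← hG.apply 1 0]
  have hG02 : Gm 2 0 = Gm 0 2 := by rw [← hG.apply 2 0]
  have hG12 : Gm 2 1 = Gm 1 2 := by rw [← hG.apply 2 1]
  rw [← formOf_add] at *
  rw [wedge_formOf, lin_eq_zero] at h1 h2 ⊢
  obtain ⟨h1a, h1b, h1c⟩ := h1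
  obtain ⟨h2a, h2b, h2c⟩ := h2
  rw [wedge_formOf, wedge_formOf]
  rw [show ∀ p q r u v w : F,
      (C p * X 0 + C q * X 1 + C r * X 2 + (C u * X 0 + C v * X 1 + C w * X 2)
        : MvPolynomial (Fin 3) F)
      = C (p + u) * X 0 + C (q + v) * X 1 + C (r + w) * X 2 by
    intro p q r u v w; simp only [map_add]; ring]
  rw [lin_eq_zero]
  simp only [Matrix.add_apply, s00, s01, s02, s10, s11, s12, s20, s21, s22,
    t00, t01, t02, t10, t11, t12, t20, t21, t22, hF01, hF02, hF12, hG01, hG02, hG12] at *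
  constructor
  · rintro ⟨e0, e1, e2⟩
    refine ⟨?_, ?_, ?_⟩
    · linear_combination e0 - h1a - h2a
    · linear_combination e1 - h1b - h2b
    · linear_combination e2 - h1c - h2c
  · rintro ⟨e0, e1, e2⟩
    refine ⟨?_, ?_, ?_⟩
    · linear_combination e0 + h1a + h2a
    · linear_combination e1 + h1b + h2b
    · linear_combination e2 + h1c + h2c

end
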